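/- Suppose the E-GCM graph (Γ,M) is unital OA-cyclic. Then for all w in the associated Coxeter group W, f_1·ℓ(w) ≤ |N_M(w)| ≤ f_2·ℓ(w), where f_1 (resp. f_2) is the minimum (resp. maximum) of f_{Γ',M'} over OA-connected components (Γ',M') of (Γ,M), and f_{Γ',M'} is the (finite) number of positive roots that are scalar multiples of any fixed simple root of that component. -/

import Mathlib

open Real

/-- The quasi-standard reflection `s_i` as a linear endomorphism of `V = ℝⁿ` with basis of
simple roots `α_j = Pi.single j 1`: `s_i(v) = v − 2B(α_i,v)α_i` where `B(α_i,α_j) = M_ij/2`. -/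
noncomputable def reflLin {n : ℕ} (M : Matrix (Fin n) (Fin n) ℝ) (i : Fin n) :
    Module.End ℝ (Fin n → ℝ) where
  toFun v := v - (∑ j, M i j * v j) • (Pi.single i 1 : Fin n → ℝ)
  map_add' v w := by
    ext t
    simp only [Pi.add_apply, Pi.sub_apply, Pi.smul_apply, smul_eq_mul, mul_add,
      Finset.sum_add_distrib]
    ring
  map_smul' c v := by
    ext t
    simp only [Pi.smul_apply, Pi.sub_apply, smul_eq_mul, RingHom.id_apply]
    rw [show (∑ j, M i j * (c * v j)) = c * ∑ j, M i j * v j from by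
      rw [Finset.mul_sum]; exact Finset.sum_congr rfl fun j _ => by ring]
    ring

/-- `M` is an E-generalized Cartan matrix whose amplitude products correspond to the
Coxeter matrix `K` (where `K i j = 0` encodes `m_ij = ∞`). -/
def IsEGCM {n : ℕ} (M : Matrix (Fin n) (Fin n) ℝ) (K : CoxeterMatrix (Fin n)) : Prop :=
  (∀ i, M i i = 2) ∧ (∀ i j, i ≠ j → M i j ≤ 0) ∧ (∀ i j, M i j = 0 ↔ M j i = 0) ∧
  (∀ i j, i ≠ j →
    (K i j = 0 ∧ 4 ≤ M i j * M j i) ∨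
    (2 ≤ K i j ∧ M i j * M j i = 4 * Real.cos (π / (K i j : ℝ)) ^ 2))

/-- The root system `Φ_M = {w·α_i}` of the quasi-standard geometric representation,
where the representation is given by `ρ`. -/
def Phi {n : ℕ} {W : Type*} [Group W] (ρ : W →* Module.End ℝ (Fin n → ℝ)) :
    Set (Fin n → ℝ) :=
  {v | ∃ (w : W) (i : Fin n), v = ρ w (Pi.single i 1)}

/-- The positive roots: roots that are nonnegative combinations of the simple roots. -/
def PhiPlus {n : ℕ} {W : Type*} [Group W] (ρ : W →* Module.End ℝ (Fin n → ℝ)) :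
    Set (Fin n → ℝ) :=
  {v | v ∈ Phi ρ ∧ ∀ j, 0 ≤ v j}

/-- The negative roots: roots that are nonpositive combinations of the simple roots. -/
def PhiMinus {n : ℕ} {W : Type*} [Group W] (ρ : W →* Module.End ℝ (Fin n → ℝ)) :
    Set (Fin n → ℝ) :=
  {v | v ∈ Phi ρ ∧ ∀ j, v j ≤ 0}

/-- The set of real scalar multiples of the simple root `α_i`. -/
def multA {n : ℕ} (i : Fin n) : Set (Fin n → ℝ) :=
  {v | ∃ c : ℝ, v = c • (Pi.single i 1 : Fin n → ℝ)}

/-- `N_M(w)`: the set of positive roots sent by `w` to negative roots. -/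
def NM {n : ℕ} {W : Type*} [Group W] (ρ : W →* Module.End ℝ (Fin n → ℝ)) (w : W) :
    Set (Fin n → ℝ) :=
  {v | v ∈ PhiPlus ρ ∧ ρ w v ∈ PhiMinus ρ}

/-- Nodes `i` and `j` are odd-adjacent: `i ≠ j` and `m_ij` is odd. -/
def OAStep {n : ℕ} (K : CoxeterMatrix (Fin n)) (i j : Fin n) : Prop :=
  i ≠ j ∧ Odd (K i j)

/-- The constant `K_{ji} = −M_{ji}/(2cos(π/m_ij))` associated to an odd adjacency. -/
noncomputable def Kcoef {n : ℕ} (M : Matrix (Fin n) (Fin n) ℝ) (K : CoxeterMatrix (Fin n))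
    (i j : Fin n) : ℝ :=
  -(M j i) / (2 * Real.cos (Real.pi / (K i j : ℝ)))

/-- The product `Π_P` of the constants `K` along an OA-path starting at `i` and continuing
through the list `l`. -/
noncomputable def prodOA {n : ℕ} (M : Matrix (Fin n) (Fin n) ℝ) (K : CoxeterMatrix (Fin n)) :
    Fin n → List (Fin n) → ℝ
  | _, [] => 1
  | i, j :: l => Kcoef M K i j * prodOA M K j l

/-- The E-GCM graph is unital OA-cyclic: every OA-cycle has product `1`. -/
def UnitalOACyclic {n : ℕ} (M : Matrix (Fin n) (Fin n) ℝ) (K : CoxeterMatrix (Fin n)) : Prop :=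
  ∀ (i : Fin n) (l : List (Fin n)), List.Chain (OAStep K) i l →
    (i :: l).getLast (List.cons_ne_nil _ _) = i → prodOA M K i l = 1

/-- Two nodes are OA-connected if they are joined by an OA-path. -/
def OAConn {n : ℕ} (K : CoxeterMatrix (Fin n)) (i j : Fin n) : Prop :=
  Relation.ReflTransGen (OAStep K) i j

/-- The number of positive roots that are scalar multiples of the simple root `α_x`. -/
noncomputable def fnode {n : ℕ} {W : Type*} [Group W]
    (ρ : W →* Module.End ℝ (Fin n → ℝ)) (x : Fin n) : ℕ :=
  (PhiPlus ρ ∩ multA x).ncard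

section Basics

variable {n : ℕ} {W : Type*} [Group W]
  {M : Matrix (Fin n) (Fin n) ℝ} {K : CoxeterMatrix (Fin n)}
  {cs : CoxeterSystem K W}
  {ρ : W →* Module.End ℝ (Fin n → ℝ)}

local notation "sg" i => (Pi.single i 1 : Fin n → ℝ)

theorem reflLin_apply (i : Fin n) (v : Fin n → ℝ) :
    reflLin M i v = v - (∑ j, M i j * v j) • (sg i) := rfl

theorem sumM_single (k i : Fin n) : (∑ t, M k t * (sg i) t) = M k i := by
  have : ∀ t, M k t * (sg i) t = if t = i then M k t else 0 := by
    intro t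
    by_cases h : t = i <;> simp [Pi.single_apply, h]
  simp only [this, Finset.sum_ite_eq' Finset.univ i (fun t => M k t), Finset.mem_univ, if_true]

theorem sumM_pair (k i i' : Fin n) (x y : ℝ) :
    (∑ t, M k t * (x • (sg i) + y • (sg i')) t) = x * M k i + y * M k i' := by
  have : ∀ t, M k t * (x • (sg i) + y • (sg i')) t
      = x * (M k t * (sg i) t) + y * (M k t * (sg i') t) := by
    intro t
    simp only [Pi.add_apply, Pi.smul_apply, smul_eq_mul]
    ring
  rw [Finset.sum_congr rfl (fun t _ => this t), Finset.sum_add_distrib,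
    ← Finset.mul_sum, ← Finset.mul_sum, sumM_single, sumM_single]

theorem reflLin_single (k j : Fin n) :
    reflLin M k (sg j) = (sg j) - M k j • (sg k) := by
  rw [reflLin_apply, sumM_single]

theorem reflLin_self (h2 : M k k = 2) :
    reflLin M k (sg k) = -(sg k) := by
  rw [reflLin_single, h2]
  ext t
  simp only [Pi.sub_apply, Pi.smul_apply, Pi.neg_apply, smul_eq_mul]
  ring

theorem reflLin_pair_left (i i' : Fin n) (h2 : M i i = 2) (x y : ℝ) :
    reflLin M i (x • (sg i) + y • (sg i'))
      = (-x - M i i' * y) • (sg i) + y • (sg i') := by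
  rw [reflLin_apply, sumM_pair]
  ext t
  simp only [Pi.add_apply, Pi.sub_apply, Pi.smul_apply, smul_eq_mul, h2]
  ring

theorem reflLin_pair_right (i i' : Fin n) (h2 : M i' i' = 2) (x y : ℝ) :
    reflLin M i' (x • (sg i) + y • (sg i'))
      = x • (sg i) + (-y - M i' i * x) • (sg i') := by
  rw [reflLin_apply, sumM_pair]
  ext t
  simp only [Pi.add_apply, Pi.sub_apply, Pi.smul_apply, smul_eq_mul, h2]
  ring

theorem rho_mul_apply (w u : W) (v : Fin n → ℝ) :
    ρ (w * u) v = ρ w (ρ u v) := by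
  rw [map_mul]; rfl

theorem rho_inj (w : W) : Function.Injective ⇑(ρ w) := by
  intro u v h
  have h2 : ρ w⁻¹ (ρ w u) = ρ w⁻¹ (ρ w v) := by rw [h]
  rwa [← rho_mul_apply, ← rho_mul_apply, inv_mul_cancel, map_one,
    Module.End.one_apply, Module.End.one_apply] at h2

theorem single_ne_zero' (i : Fin n) : (sg i) ≠ 0 := by
  intro h
  have := congrFun h i
  simp [Pi.single_eq_same] at this

theorem rho_single_ne (w : W) (j : Fin n) : ρ w (sg j) ≠ 0 := by
  intro h
  exact single_ne_zero' j (rho_inj w (h.trans (map_zero (ρ w)).symm))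

theorem mem_Phi (w : W) (j : Fin n) : ρ w (sg j) ∈ Phi ρ := ⟨w, j, rfl⟩

theorem Phi_smul_mem (u : W) {v : Fin n → ℝ} (hv : v ∈ Phi ρ) : ρ u v ∈ Phi ρ := by
  obtain ⟨w, j, rfl⟩ := hv
  exact ⟨u * w, j, (rho_mul_apply u w _).symm⟩

theorem Phi_ne_zero {v : Fin n → ℝ} (hv : v ∈ Phi ρ) : v ≠ 0 := by
  obtain ⟨w, j, rfl⟩ := hv
  exact rho_single_ne w j

end Basics
namespace EGCMAux

open Real

/-- Coefficient recursion for the dihedral orbit of `α_i`. -/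
noncomputable def xy (a b : ℝ) : ℕ → ℝ × ℝ
  | 0 => (1, 0)
  | (k+1) =>
      if Even k then ((xy a b k).1, -(xy a b k).2 - b * (xy a b k).1)
      else (-(xy a b k).1 - a * (xy a b k).2, (xy a b k).2)

theorem xy_zero (a b : ℝ) : xy a b 0 = (1, 0) := rfl

theorem xy_succ_even (a b : ℝ) {k : ℕ} (hk : Even k) :
    xy a b (k+1) = ((xy a b k).1, -(xy a b k).2 - b * (xy a b k).1) := by
  rw [xy, if_pos hk]

theorem xy_succ_odd (a b : ℝ) {k : ℕ} (hk : ¬ Even k) :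
    xy a b (k+1) = (-(xy a b k).1 - a * (xy a b k).2, (xy a b k).2) := by
  rw [xy, if_neg hk]

section Finite

variable {a b : ℝ} {m : ℕ}

/-- `S j = sin (jθ)/sin θ` with `θ = π/m`. -/
noncomputable def S (m : ℕ) (j : ℕ) : ℝ := Real.sin (j * (π / m)) / Real.sin (π / m)

theorem theta_pos (hm : 2 ≤ m) : 0 < π / m :=
  div_pos Real.pi_pos (by exact_mod_cast Nat.lt_of_lt_of_le Nat.zero_lt_two hm)

theorem theta_le (hm : 2 ≤ m) : π / m ≤ π / 2 := by
  apply div_le_div_of_nonneg_left Real.pi_pos.le (by norm_num)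
  exact_mod_cast hm

theorem sin_theta_pos (hm : 2 ≤ m) : 0 < Real.sin (π / m) := by
  apply Real.sin_pos_of_pos_of_lt_pi (theta_pos hm)
  calc π / m ≤ π / 2 := theta_le hm
  _ < π := by linarith [Real.pi_pos]

theorem m_ne (hm : 2 ≤ m) : (m : ℝ) ≠ 0 := by
  have : (0:ℕ) < m := lt_of_lt_of_le (by norm_num) hm
  exact_mod_cast this.ne'

theorem m_theta (hm : 2 ≤ m) : (m : ℝ) * (π / m) = π := by
  field_simp [m_ne hm]

theorem S_nonneg (hm : 2 ≤ m) {j : ℕ} (hj : j ≤ m) : 0 ≤ S m j := by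
  apply div_nonneg _ (sin_theta_pos hm).le
  apply Real.sin_nonneg_of_nonneg_of_le_pi
  · positivity
  · have h1 : (j : ℝ) * (π / m) ≤ (m : ℝ) * (π / m) := by
      apply mul_le_mul_of_nonneg_right _ (theta_pos hm).le
      exact_mod_cast hj
    rw [m_theta hm] at h1
    exact h1

theorem S_pos (hm : 2 ≤ m) {j : ℕ} (hj0 : 0 < j) (hjm : j < m) : 0 < S m j := by
  apply div_pos _ (sin_theta_pos hm)
  apply Real.sin_pos_of_pos_of_lt_pi
  · have : (0:ℝ) < j := by exact_mod_cast hj0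
    positivity
  · have h1 : (j : ℝ) * (π / m) < (m : ℝ) * (π / m) := by
      apply mul_lt_mul_of_pos_right _ (theta_pos hm)
      exact_mod_cast hjm
    rw [m_theta hm] at h1
    exact h1

theorem S_zero (hm : 2 ≤ m) : S m 0 = 0 := by simp [S]

theorem S_one (hm : 2 ≤ m) : S m 1 = 1 := by
  rw [S]
  rw [Nat.cast_one, one_mul, div_self (sin_theta_pos hm).ne']

theorem S_m (hm : 2 ≤ m) : S m m = 0 := by
  rw [S, m_theta hm, Real.sin_pi, zero_div]

theorem S_m_sub_one (hm : 2 ≤ m) : S m (m - 1) = 1 := by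
  rw [S]
  have h1 : ((m - 1 : ℕ) : ℝ) = (m : ℝ) - 1 := by
    have : 1 ≤ m := le_trans (by norm_num) hm
    push_cast [this]; ring
  rw [h1, sub_mul, one_mul, m_theta hm, Real.sin_pi_sub, div_self (sin_theta_pos hm).ne']

theorem S_m_add_one (hm : 2 ≤ m) : S m (m + 1) = -1 := by
  rw [S]
  have h1 : ((m + 1 : ℕ) : ℝ) * (π / m) = π + π / m := by
    push_cast
    rw [add_mul, one_mul, m_theta hm]
  rw [h1, Real.sin_add, Real.sin_pi, Real.cos_pi]
  rw [div_eq_iff (sin_theta_pos hm).ne']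
  ring

theorem S_eq_zero_iff (hm : 2 ≤ m) {j : ℕ} (hj : j ≤ m) : S m j = 0 ↔ j = 0 ∨ j = m := by
  constructor
  · intro h
    by_contra hc
    push_neg at hc
    have h1 : 0 < j := Nat.pos_of_ne_zero hc.1
    have h2 : j < m := lt_of_le_of_ne hj hc.2
    exact absurd h (S_pos hm h1 h2).ne'
  · rintro (rfl | rfl)
    · exact S_zero hm
    · exact S_m hm

theorem S_rec (hm : 2 ≤ m) (j : ℕ) :
    S m (j + 2) = 2 * Real.cos (π / m) * S m (j + 1) - S m j := by
  have key : Real.sin (((j:ℝ)+2) * (π/m))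
      = 2 * Real.cos (π/m) * Real.sin (((j:ℝ)+1) * (π/m)) - Real.sin ((j:ℝ) * (π/m)) := by
    have e1 : ((j:ℝ)+2) * (π/m) = (((j:ℝ)+1) * (π/m)) + π/m := by ring
    have e2 : ((j:ℝ)) * (π/m) = (((j:ℝ)+1) * (π/m)) - π/m := by ring
    rw [e1, e2, Real.sin_add, Real.sin_sub]
    ring
  rw [S, S, S]
  push_cast
  rw [key]
  ring

end Finite

end EGCMAux
namespace EGCMAux

open Real

section FiniteWindow

variable {a b : ℝ} {m : ℕ}

theorem cos_theta_nonneg (hm : 2 ≤ m) : 0 ≤ Real.cos (π / m) := by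
  apply Real.cos_nonneg_of_mem_Icc
  constructor
  · linarith [theta_pos hm, Real.pi_pos]
  · exact theta_le hm

theorem cos_theta_pos (hm : 3 ≤ m) : 0 < Real.cos (π / m) := by
  apply Real.cos_pos_of_mem_Ioo
  constructor
  · linarith [theta_pos (by omega : 2 ≤ m), Real.pi_pos]
  · have h1 : π / m ≤ π / 3 := by
      apply div_le_div_of_nonneg_left Real.pi_pos.le (by norm_num)
      exact_mod_cast hm
    linarith [Real.pi_pos]

theorem m_eq_two_of_cos_zero (hm : 2 ≤ m) (h : Real.cos (π / m) = 0) : m = 2 := by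
  by_contra hne
  have h3 : 3 ≤ m := by omega
  exact absurd h (cos_theta_pos h3).ne'

/-- Closed formula for the coefficient recursion in the finite (`2 ≤ m`) case. -/
theorem xy_formula (hm : 2 ≤ m) (ha : a ≠ 0) (hab : a * b = 4 * Real.cos (π / m) ^ 2) :
    ∀ k : ℕ, xy a b k = if Even k then (S m (k+1), (2 * Real.cos (π/m) / (-a)) * S m k)
      else (S m k, (2 * Real.cos (π/m) / (-a)) * S m (k+1)) := by
  intro k
  have hane : (-a) ≠ 0 := neg_ne_zero.mpr ha
  have h2cE : 2 * Real.cos (π/m) * (2 * Real.cos (π/m) / (-a)) = -b := by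
    rw [← mul_div_assoc, div_eq_iff hane]
    linear_combination -hab
  have haE : a * (2 * Real.cos (π/m) / (-a)) = -(2 * Real.cos (π/m)) := by
    rw [← mul_div_assoc, div_eq_iff hane]
    ring
  set c := Real.cos (π/m) with hc
  set E := 2 * c / (-a) with hE
  induction k with
  | zero =>
      simp only [if_pos (Even.zero)]
      rw [xy_zero, S_one hm, S_zero hm]
      norm_num
  | succ k ih =>
      rcases Nat.even_or_odd k with hk | hk
      · have hk1 : ¬ Even (k+1) := by rw [Nat.even_add_one]; exact not_not_intro hk
        rw [xy_succ_even a b hk, ih, if_pos hk, if_neg hk1]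
        have hrec := S_rec hm k
        rw [← hc] at hrec
        have hEb : -(E * S m k) - b * S m (k+1) = E * S m (k+2) := by
          rw [hrec]
          linear_combination (-(S m (k+1))) * h2cE
        simp only [hEb]
      · have hk' : ¬ Even k := Nat.not_even_iff_odd.mpr hk
        have hk1 : Even (k+1) := Nat.even_add_one.mpr hk'
        rw [xy_succ_odd a b hk', ih, if_neg hk', if_pos hk1]
        have hrec := S_rec hm k
        rw [← hc] at hrec
        have hEa : -(S m k) - a * (E * S m (k+1)) = S m (k+2) := by
          rw [hrec]
          linear_combination (-(S m (k+1))) * haE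
        simp only [hEa]

/-- The window lemma in the finite case. -/
theorem windowF (hm : 2 ≤ m) (ha : a ≤ 0) (hb : b ≤ 0) (hab0 : a = 0 → b = 0)
    (hab : a * b = 4 * Real.cos (π / m) ^ 2) {k : ℕ} (hk : k + 1 ≤ m) :
    0 ≤ (xy a b k).1 ∧ 0 ≤ (xy a b k).2 ∧
    ((xy a b k).2 = 0 → (xy a b k).1 = 1) ∧
    ((xy a b k).1 = 0 → Odd m ∧ (xy a b k).2 = -b / (2 * Real.cos (π / m))) := by
  rcases eq_or_lt_of_le ha with haz | haneg
  · -- a = 0, hence b = 0 and m = 2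
    have haz' : a = 0 := haz
    have hbz : b = 0 := hab0 haz'
    have hcz : Real.cos (π/m) = 0 := by
      have h4 : 4 * Real.cos (π/m)^2 = 0 := by rw [← hab, haz', zero_mul]
      nlinarith
    have hm2 : m = 2 := m_eq_two_of_cos_zero hm hcz
    subst hm2
    have hk01 : k = 0 ∨ k = 1 := by omega
    rcases hk01 with rfl | rfl
    · rw [xy_zero]; norm_num
    · rw [xy_succ_even a b Even.zero, xy_zero, hbz]
      norm_num
  · -- a < 0
    have hf := xy_formula hm haneg.ne hab
    have hcnn : 0 ≤ Real.cos (π/m) := cos_theta_nonneg hm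
    set c := Real.cos (π/m) with hc
    set E := 2 * c / (-a) with hE
    have hEnn : 0 ≤ E := div_nonneg (by linarith) (by linarith)
    have hczm2 : c = 0 → m = 2 := fun h => m_eq_two_of_cos_zero hm h
    rcases Nat.even_or_odd k with hk2 | hk2
    · rw [hf k, if_pos hk2]
      dsimp only
      have h1 : 0 ≤ S m (k+1) := S_nonneg hm hk
      have h2 : 0 ≤ S m k := S_nonneg hm (by omega)
      refine ⟨h1, mul_nonneg hEnn h2, ?_, ?_⟩
      · intro hy
        rcases mul_eq_zero.mp hy with hy | hy
        · have hcz : c = 0 := by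
            rw [hE] at hy
            rcases div_eq_zero_iff.mp hy with h | h
            · linarith
            · linarith
          have hm2 : m = 2 := hczm2 hcz
          have hk0 : k = 0 := by
            rcases hk2 with ⟨r, hr⟩
            omega
          subst hk0
          exact S_one hm
        · have hk0 : k = 0 := by
            rcases (S_eq_zero_iff hm (by omega)).mp hy with h | h
            · exact h
            · omega
          subst hk0
          exact S_one hm
      · intro hx
        have hkm : k + 1 = m := by
          rcases (S_eq_zero_iff hm hk).mp hx with h | h
          · omega
          · exact h
        have hmodd : Odd m := by
          rw [← hkm]
          exact Even.add_one hk2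
        refine ⟨hmodd, ?_⟩
        have hkm1 : k = m - 1 := by omega
        subst hkm1
        rw [S_m_sub_one hm, mul_one]
        have hcpos : 0 < c := by
          have h3 : 3 ≤ m := by
            rcases hmodd with ⟨r, hr⟩
            omega
          exact cos_theta_pos h3
        rw [hE, div_eq_div_iff (by linarith) (by linarith)]
        nlinarith [hab]
    · have hk' : ¬ Even k := Nat.not_even_iff_odd.mpr hk2
      rw [hf k, if_neg hk']
      dsimp only
      have h1 : 0 ≤ S m k := S_nonneg hm (by omega)
      have h2 : 0 ≤ S m (k+1) := S_nonneg hm hk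
      refine ⟨h1, mul_nonneg hEnn h2, ?_, ?_⟩
      · intro hy
        rcases mul_eq_zero.mp hy with hy | hy
        · have hcz : c = 0 := by
            rw [hE] at hy
            rcases div_eq_zero_iff.mp hy with h | h
            · linarith
            · linarith
          have hm2 : m = 2 := hczm2 hcz
          have hk1 : k = 1 := by
            rcases hk2 with ⟨r, hr⟩
            omega
          subst hk1
          exact S_one hm
        · have hkm : k + 1 = m := by
            rcases (S_eq_zero_iff hm hk).mp hy with h | h
            · omega
            · exact h
          have hkm1 : k = m - 1 := by omega
          subst hkm1
          exact S_m_sub_one hm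
      · intro hx
        exfalso
        rcases (S_eq_zero_iff hm (by omega)).mp hx with h | h
        · rcases hk2 with ⟨r, hr⟩; omega
        · omega

end FiniteWindow

section InfiniteWindow

variable {a b : ℝ}

theorem windowI_aux {σ τ : ℝ} (hσ : 0 < σ) (hτ : 0 < τ) (ha : a = -σ^2) (hb : b = -τ^2)
    (hστ : 2 ≤ σ * τ) :
    ∀ k : ℕ, 0 < (xy a b k).1 ∧ 0 ≤ (xy a b k).2 ∧ (k ≠ 0 → 0 < (xy a b k).2) ∧
      (Even k → σ * (xy a b k).2 ≤ τ * (xy a b k).1) ∧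
      (¬ Even k → τ * (xy a b k).1 ≤ σ * (xy a b k).2) := by
  intro k
  induction k with
  | zero =>
      rw [xy_zero]
      refine ⟨by norm_num, le_refl 0, by simp, ?_, ?_⟩
      · intro _
        simp only [mul_zero, mul_one]
        positivity
      · intro h; exact absurd Even.zero h
  | succ k ih =>
      obtain ⟨hx, hy, hy', hev, hodd⟩ := ih
      rcases Nat.even_or_odd k with hk | hk
      · have hk1 : ¬ Even (k+1) := by rw [Nat.even_add_one]; exact not_not_intro hk
        rw [xy_succ_even a b hk]
        have hinv := hev hk
        set x := (xy a b k).1 with hxd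
        set y := (xy a b k).2 with hyd
        have key1 : τ * (σ * y) ≤ τ * (τ * x) := mul_le_mul_of_nonneg_left hinv hτ.le
        have key2 : 2 * y ≤ (σ * τ) * y := mul_le_mul_of_nonneg_right hστ hy
        have hynew : 0 < -y - b * x := by
          rw [hb]
          rcases eq_or_lt_of_le hy with hy0 | hy0
          · nlinarith [mul_pos (mul_pos hτ hτ) hx]
          · nlinarith
        have key3 : 2 * (τ * x) ≤ (σ * τ) * (τ * x) :=
          mul_le_mul_of_nonneg_right hστ (mul_nonneg hτ.le hx.le)
        refine ⟨hx, ?_, fun _ => hynew, fun h => absurd h hk1, fun _ => ?_⟩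
        · show (0:ℝ) ≤ -y - b * x
          linarith
        · show τ * x ≤ σ * (-y - b * x)
          rw [hb]
          nlinarith
      · have hk' : ¬ Even k := Nat.not_even_iff_odd.mpr hk
        have hk1 : Even (k+1) := Nat.even_add_one.mpr hk'
        rw [xy_succ_odd a b hk']
        have hinv := hodd hk'
        have hypos : 0 < (xy a b k).2 := hy' (by rcases hk with ⟨r, hr⟩; omega)
        set x := (xy a b k).1 with hxd
        set y := (xy a b k).2 with hyd
        have key2 : 2 * (σ * y) ≤ (σ * τ) * (σ * y) :=
          mul_le_mul_of_nonneg_right hστ (mul_nonneg hσ.le hy)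
        have hxnew : 0 < -x - a * y := by
          have h5 : 0 < τ * (-x - a * y) := by
            rw [ha]
            nlinarith
          have h6 := div_pos h5 hτ
          rwa [mul_div_cancel_left₀ _ hτ.ne'] at h6
        refine ⟨hxnew, hy, fun _ => hypos, fun _ => ?_, fun h => absurd hk1 h⟩
        show σ * y ≤ τ * (-x - a * y)
        rw [ha]
        nlinarith

/-- The window lemma in the infinite (`m = 0`, `ab ≥ 4`) case. -/
theorem windowI (ha : a < 0) (hb : b < 0) (hab : 4 ≤ a * b) (k : ℕ) :
    0 < (xy a b k).1 ∧ 0 ≤ (xy a b k).2 ∧ (k ≠ 0 → 0 < (xy a b k).2) := by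
  have hσ : 0 < Real.sqrt (-a) := Real.sqrt_pos.mpr (by linarith)
  have hτ : 0 < Real.sqrt (-b) := Real.sqrt_pos.mpr (by linarith)
  have ha' : a = -(Real.sqrt (-a))^2 := by
    rw [Real.sq_sqrt (by linarith : (0:ℝ) ≤ -a)]; ring
  have hb' : b = -(Real.sqrt (-b))^2 := by
    rw [Real.sq_sqrt (by linarith : (0:ℝ) ≤ -b)]; ring
  have hστ : 2 ≤ Real.sqrt (-a) * Real.sqrt (-b) := by
    have h1 : (Real.sqrt (-a) * Real.sqrt (-b))^2 = a * b := by
      rw [mul_pow, Real.sq_sqrt (by linarith : (0:ℝ) ≤ -a),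
        Real.sq_sqrt (by linarith : (0:ℝ) ≤ -b)]
      ring
    nlinarith [mul_pos hσ hτ]
  obtain ⟨h1, h2, h3, _, _⟩ := windowI_aux hσ hτ ha' hb' hστ k
  exact ⟨h1, h2, h3⟩

end InfiniteWindow

end EGCMAux
section Dihedral

open EGCMAux

variable {n : ℕ} {W : Type*} [Group W]
  {M : Matrix (Fin n) (Fin n) ℝ} {K : CoxeterMatrix (Fin n)}
  {cs : CoxeterSystem K W}
  {ρ : W →* Module.End ℝ (Fin n → ℝ)}

local notation "sg" i => (Pi.single i 1 : Fin n → ℝ)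

theorem rho_simple_single (hMK : IsEGCM M K) (hρ : ∀ i, ρ (cs.simple i) = reflLin M i)
    (i : Fin n) : ρ (cs.simple i) (sg i) = -(sg i) := by
  rw [hρ i, reflLin_self (hMK.1 i)]

/-- The orbit formula: the coefficients of `ρ(π(alternatingWord i i' k)) α_i`. -/
theorem P_eq (hMK : IsEGCM M K) (hρ : ∀ i, ρ (cs.simple i) = reflLin M i) (i i' : Fin n) :
    ∀ k : ℕ, ρ (cs.wordProd (CoxeterSystem.alternatingWord i i' k)) (sg i)
      = (xy (M i i') (M i' i) k).1 • (sg i) + (xy (M i i') (M i' i) k).2 • (sg i') := by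
  intro k
  induction k with
  | zero =>
      rw [CoxeterSystem.alternatingWord, cs.wordProd_nil, map_one, Module.End.one_apply,
        xy_zero]
      simp
  | succ k ih =>
      rw [CoxeterSystem.alternatingWord_succ', cs.wordProd_cons, rho_mul_apply, ih]
      rcases Nat.even_or_odd k with hk | hk
      · rw [if_pos hk, hρ i', xy_succ_even _ _ hk]
        exact reflLin_pair_right i i' (hMK.1 i') _ _
      · have hk' : ¬ Even k := Nat.not_even_iff_odd.mpr hk
        rw [if_neg hk', hρ i, xy_succ_odd _ _ hk']
        exact reflLin_pair_left i i' (hMK.1 i) _ _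

theorem mem_aw (i i' : Fin n) : ∀ (k : ℕ) (j : Fin n),
    j ∈ CoxeterSystem.alternatingWord i i' k → j = i ∨ j = i' := by
  intro k
  induction k with
  | zero => intro j hj; simp [CoxeterSystem.alternatingWord] at hj
  | succ k ih =>
      intro j hj
      rw [CoxeterSystem.alternatingWord_succ'] at hj
      rcases List.mem_cons.mp hj with hj | hj
      · rcases Nat.even_or_odd k with hk | hk
        · rw [if_pos hk] at hj; right; exact hj
        · rw [if_neg (Nat.not_even_iff_odd.mpr hk)] at hj; left; exact hj
      · exact ih j hj

theorem chain'_or_dup : ∀ ω : List (Fin n),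
    List.Chain' (fun a b => a ≠ b) ω ∨ ∃ (ω₁ : List (Fin n)) (j : Fin n) (ω₂ : List (Fin n)),
      ω = ω₁ ++ j :: j :: ω₂ := by
  intro ω
  induction ω with
  | nil => left; exact List.isChain_nil
  | cons j rest ih =>
      rcases ih with hch | ⟨ω₁, t, ω₂, rfl⟩
      · cases rest with
        | nil => left; exact List.isChain_singleton j
        | cons t rest' =>
            by_cases hjt : j = t
            · right
              refine ⟨[], j, rest', ?_⟩
              rw [hjt]
              simp
            · left; exact List.isChain_cons_cons.mpr ⟨hjt, hch⟩
      · right; exact ⟨j :: ω₁, t, ω₂, rfl⟩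

theorem wordProd_dup (ω₁ ω₂ : List (Fin n)) (t : Fin n) :
    cs.wordProd (ω₁ ++ t :: t :: ω₂) = cs.wordProd (ω₁ ++ ω₂) := by
  rw [cs.wordProd_append, cs.wordProd_append, cs.wordProd_cons, cs.wordProd_cons,
    cs.simple_mul_simple_cancel_left]

/-- Words over a two-letter alphabet with no adjacent repetitions are alternating words. -/
theorem alt_of_chain (i i' : Fin n) : ∀ ω : List (Fin n), (∀ j ∈ ω, j = i ∨ j = i') →
    List.Chain' (fun a b => a ≠ b) ω →
    ω = CoxeterSystem.alternatingWord i i' ω.length ∨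
    ω = CoxeterSystem.alternatingWord i' i ω.length := by
  intro ω
  induction ω with
  | nil => intro _ _; left; rfl
  | cons j rest ih =>
      intro halpha hch
      have hj := halpha j (List.mem_cons_self)
      cases rest with
      | nil =>
          rcases hj with rfl | rfl
          · right; rfl
          · left; rfl
      | cons t rest' =>
          have hjt : j ≠ t := (List.isChain_cons_cons.mp hch).1
          have hch' : List.Chain' (fun a b => a ≠ b) (t :: rest') := (List.isChain_cons_cons.mp hch).2
          have halpha' : ∀ u ∈ t :: rest', u = i ∨ u = i' :=
            fun u hu => halpha u (List.mem_cons_of_mem j hu)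
          rcases ih halpha' hch' with hA | hB
          · -- t :: rest' = aw i i' (r'+1)
            left
            have hlen : (t :: rest').length = rest'.length + 1 := rfl
            rw [hlen] at hA
            have hA' := hA
            rw [CoxeterSystem.alternatingWord_succ'] at hA'
            have ht : t = (if Even rest'.length then i' else i) := (List.cons.injEq _ _ _ _ ▸ hA' : _ ∧ _).1
            show j :: t :: rest' = CoxeterSystem.alternatingWord i i' (rest'.length + 1 + 1)
            rw [CoxeterSystem.alternatingWord_succ']
            have hhead : j = (if Even (rest'.length + 1) then i' else i) := by
              by_cases hr : Even rest'.length
              · have h1 : ¬ Even (rest'.length + 1) := by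
                  rw [Nat.even_add_one]; exact not_not_intro hr
                rw [if_neg h1]
                rw [if_pos hr] at ht
                rcases hj with h | h
                · exact h
                · exact absurd (h.trans ht.symm) hjt
              · have h1 : Even (rest'.length + 1) := Nat.even_add_one.mpr hr
                rw [if_pos h1]
                rw [if_neg hr] at ht
                rcases hj with h | h
                · exact absurd (h.trans ht.symm) hjt
                · exact h
            rw [← hhead, ← hA]
          · -- t :: rest' = aw i' i (r'+1)
            right
            have hlen : (t :: rest').length = rest'.length + 1 := rfl
            rw [hlen] at hB
            have hB' := hB
            rw [CoxeterSystem.alternatingWord_succ'] at hB'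
            have ht : t = (if Even rest'.length then i else i') := (List.cons.injEq _ _ _ _ ▸ hB' : _ ∧ _).1
            show j :: t :: rest' = CoxeterSystem.alternatingWord i' i (rest'.length + 1 + 1)
            rw [CoxeterSystem.alternatingWord_succ']
            have hhead : j = (if Even (rest'.length + 1) then i else i') := by
              by_cases hr : Even rest'.length
              · have h1 : ¬ Even (rest'.length + 1) := by
                  rw [Nat.even_add_one]; exact not_not_intro hr
                rw [if_neg h1]
                rw [if_pos hr] at ht
                rcases hj with h | h
                · exact absurd (h.trans ht.symm) hjt
                · exact h
              · have h1 : Even (rest'.length + 1) := Nat.even_add_one.mpr hr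
                rw [if_pos h1]
                rw [if_neg hr] at ht
                rcases hj with h | h
                · exact h
                · exact absurd (h.trans ht.symm) hjt
            rw [← hhead, ← hB]

theorem aw_period (i i' : Fin n) (hm : 1 ≤ K i i') {k : ℕ} (hk : 2 * K i i' ≤ k) :
    cs.wordProd (CoxeterSystem.alternatingWord i i' k)
      = cs.wordProd (CoxeterSystem.alternatingWord i i' (k - 2 * K i i')) := by
  rw [cs.prod_alternatingWord_eq_mul_pow, cs.prod_alternatingWord_eq_mul_pow]
  have hpar : Even (k - 2 * K i i') ↔ Even k := by
    rw [Nat.even_iff, Nat.even_iff]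
    omega
  have hdiv : k / 2 = (k - 2 * K i i') / 2 + K i i' := by omega
  have hpow : (cs.simple i * cs.simple i') ^ (k / 2)
      = (cs.simple i * cs.simple i') ^ ((k - 2 * K i i') / 2) := by
    rw [hdiv, pow_add, cs.simple_mul_simple_pow i i', mul_one]
  rw [hpow]
  by_cases h : Even k
  · rw [if_pos h, if_pos (hpar.mpr h)]
  · rw [if_neg h, if_neg (fun hc => h (hpar.mp hc))]

end Dihedral
section DihMain

open EGCMAux

variable {n : ℕ} {W : Type*} [Group W]
  {M : Matrix (Fin n) (Fin n) ℝ} {K : CoxeterMatrix (Fin n)}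
  {cs : CoxeterSystem K W}
  {ρ : W →* Module.End ℝ (Fin n → ℝ)}

local notation "sg" i => (Pi.single i 1 : Fin n → ℝ)

/-- The conclusion of the dihedral lemma for a word `ω` over the alphabet `{i, i'}`. -/
def DCON (M : Matrix (Fin n) (Fin n) ℝ) (K : CoxeterMatrix (Fin n)) (cs : CoxeterSystem K W)
    (ρ : W →* Module.End ℝ (Fin n → ℝ)) (i i' : Fin n) (ω : List (Fin n)) : Prop :=
  ∃ x y : ℝ, ρ (cs.wordProd ω) (sg i) = x • (sg i) + y • (sg i') ∧
    ((0 ≤ x ∧ 0 ≤ y) ∨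
      ((x ≤ 0 ∧ y ≤ 0) ∧ ∃ ω' : List (Fin n), (∀ j ∈ ω', j = i ∨ j = i') ∧
        ω'.length < ω.length ∧ cs.wordProd ω' = cs.wordProd ω * cs.simple i)) ∧
    (y = 0 → x = 1 ∨ x = -1) ∧
    (x = 0 → OAStep K i i' ∧ (y = Kcoef M K i i' ∨ y = -(Kcoef M K i i')))

theorem DCON_nil (i i' : Fin n) (ω : List (Fin n)) (hω : ω = []) :
    DCON M K cs ρ i i' ω := by
  subst hω
  refine ⟨1, 0, ?_, Or.inl ⟨by norm_num, le_refl 0⟩, fun _ => Or.inl rfl,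
    fun h => absurd h one_ne_zero⟩
  rw [cs.wordProd_nil, map_one, Module.End.one_apply]
  simp

theorem DCON_transfer {i i' : Fin n} {ω ω₂ : List (Fin n)} (h : DCON M K cs ρ i i' ω₂)
    (hlen : ω₂.length < ω.length) (hπ : cs.wordProd ω₂ = cs.wordProd ω) :
    DCON M K cs ρ i i' ω := by
  obtain ⟨x, y, heq, hcone, hy0, hx0⟩ := h
  refine ⟨x, y, by rw [← hπ]; exact heq, ?_, hy0, hx0⟩
  rcases hcone with h | ⟨hxy, ω', hα, hl, hp⟩
  · exact Or.inl h
  · exact Or.inr ⟨hxy, ω', hα, lt_trans hl hlen, by rw [← hπ]; exact hp⟩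

/-- Negation step: transfer the dihedral conclusion from `aw i i' r₀` to any word `ω`
whose product satisfies `π ω = π (aw i i' r₀) * s i`. -/
theorem DCON_negate (hMK : IsEGCM M K) (hρ : ∀ i, ρ (cs.simple i) = reflLin M i)
    {i i' : Fin n} {ω : List (Fin n)} {r₀ : ℕ}
    (h : DCON M K cs ρ i i' (CoxeterSystem.alternatingWord i i' r₀))
    (hlen : r₀ < ω.length)
    (hπ : cs.wordProd ω = cs.wordProd (CoxeterSystem.alternatingWord i i' r₀) * cs.simple i) :
    DCON M K cs ρ i i' ω := by
  obtain ⟨X, Y, heq, hcone, hy0, hx0⟩ := h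
  refine ⟨-X, -Y, ?_, ?_, ?_, ?_⟩
  · rw [hπ, rho_mul_apply, rho_simple_single hMK hρ, map_neg, heq]
    ext t
    simp only [Pi.neg_apply, Pi.add_apply, Pi.smul_apply, smul_eq_mul]
    ring
  · rcases hcone with ⟨hX, hY⟩ | ⟨⟨hX, hY⟩, _⟩
    · refine Or.inr ⟨⟨by linarith, by linarith⟩,
        CoxeterSystem.alternatingWord i i' r₀, mem_aw i i' r₀, ?_, ?_⟩
      · rw [CoxeterSystem.length_alternatingWord]
        exact hlen
      · rw [hπ, cs.simple_mul_simple_cancel_right]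
    · exact Or.inl ⟨by linarith, by linarith⟩
  · intro hY
    have : Y = 0 := by linarith
    rcases hy0 this with h1 | h1
    · right; rw [h1]
    · left; rw [h1]; ring
  · intro hX
    have : X = 0 := by linarith
    obtain ⟨hOA, hK⟩ := hx0 this
    refine ⟨hOA, ?_⟩
    rcases hK with h1 | h1
    · right; rw [h1]
    · left; rw [h1]; ring

/-- The main dihedral lemma. -/
theorem dih (hMK : IsEGCM M K) (hρ : ∀ i, ρ (cs.simple i) = reflLin M i)
    (i i' : Fin n) (hii' : i ≠ i') :
    ∀ (N : ℕ) (ω : List (Fin n)), ω.length ≤ N → (∀ j ∈ ω, j = i ∨ j = i') →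
      DCON M K cs ρ i i' ω := by
  intro N
  induction N with
  | zero =>
      intro ω hlen _
      exact DCON_nil i i' ω (List.length_eq_zero_iff.mp (Nat.le_zero.mp hlen))
  | succ N ih =>
      intro ω hlen halpha
      rcases chain'_or_dup ω with hch | ⟨ω₁, t, ω₂, rfl⟩
      · -- ω is alternating
        rcases alt_of_chain i i' ω halpha hch with hA | hB
        · -- ω = aw i i' r
          obtain ⟨r, hrr⟩ : ∃ r, ω.length = r := ⟨_, rfl⟩
          rw [hrr] at hA hlen
          subst hA
          clear halpha hch hrr
          have ha : M i i' ≤ 0 := hMK.2.1 i i' hii'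
          have hb : M i' i ≤ 0 := hMK.2.1 i' i (Ne.symm hii')
          have hzero : M i i' = 0 → M i' i = 0 := fun h => (hMK.2.2.1 i i').mp h
          rcases hMK.2.2.2 i i' hii' with ⟨hm0, hab4⟩ | ⟨hm2, habc⟩
          · -- infinite bond
            have haneg : M i i' < 0 := by
              rcases eq_or_lt_of_le ha with h | h
              · exfalso
                rw [h, zero_mul] at hab4
                norm_num at hab4
              · exact h
            have hbneg : M i' i < 0 := by
              rcases eq_or_lt_of_le hb with h | h
              · exfalso
                rw [h, mul_zero] at hab4
                norm_num at hab4
              · exact h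
            obtain ⟨hx, hy, hy'⟩ := windowI haneg hbneg hab4 r
            refine ⟨(xy (M i i') (M i' i) r).1, (xy (M i i') (M i' i) r).2,
              P_eq hMK hρ i i' r, Or.inl ⟨hx.le, hy⟩, ?_, fun h => absurd h hx.ne'⟩
            intro hyz
            have hr0 : r = 0 := by
              by_contra hc
              exact absurd hyz (hy' hc).ne'
            rw [hr0, xy_zero]
            left
            norm_num
          · -- finite bond, 2 ≤ m where m = K i i'
            by_cases hcase1 : r + 1 ≤ K i i'
            · obtain ⟨hx, hy, hy0, hx0⟩ := windowF hm2 ha hb hzero habc hcase1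
              refine ⟨(xy (M i i') (M i' i) r).1, (xy (M i i') (M i' i) r).2,
                P_eq hMK hρ i i' r, Or.inl ⟨hx, hy⟩, fun h => Or.inl (hy0 h), fun h => ?_⟩
              obtain ⟨hodd, hval⟩ := hx0 h
              refine ⟨⟨hii', hodd⟩, Or.inl ?_⟩
              rw [hval]
              rfl
            · by_cases hcase2 : r ≤ K i i'
              · -- r = m : use the braid relation
                have hrm : r = K i i' := by omega
                subst hrm
                have hb1 : cs.wordProd (CoxeterSystem.alternatingWord i i' (K i i'))
                    = cs.wordProd (CoxeterSystem.alternatingWord i' i (K i i')) := by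
                  have h2m : K i i' ≤ K i i' * 2 := by omega
                  have h0 := cs.prod_alternatingWord_eq_prod_alternatingWord_sub i i' (K i i') h2m
                  have he : K i i' * 2 - K i i' = K i i' := by omega
                  rw [he] at h0
                  exact h0
                obtain ⟨m', hm'⟩ : ∃ m', K i i' = m' + 1 := ⟨K i i' - 1, by omega⟩
                have hb2 : cs.wordProd (CoxeterSystem.alternatingWord i i' (K i i'))
                    = cs.wordProd (CoxeterSystem.alternatingWord i i' m') * cs.simple i := by
                  rw [hb1, hm', CoxeterSystem.alternatingWord_succ, cs.wordProd_concat]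
                have hD0 : DCON M K cs ρ i i' (CoxeterSystem.alternatingWord i i' m') := by
                  apply ih
                  · rw [CoxeterSystem.length_alternatingWord]
                    omega
                  · exact mem_aw i i' _
                apply DCON_negate hMK hρ hD0 _ hb2
                rw [CoxeterSystem.length_alternatingWord]
                omega
              · by_cases hcase3 : 2 * K i i' ≤ r
                · -- reduce by the period
                  have hπ : cs.wordProd (CoxeterSystem.alternatingWord i i' (r - 2 * K i i'))
                      = cs.wordProd (CoxeterSystem.alternatingWord i i' r) :=
                    (aw_period i i' (by omega) hcase3).symm
                  apply DCON_transfer (ih _ _ (mem_aw i i' _)) _ hπ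
                  · rw [CoxeterSystem.length_alternatingWord]
                    omega
                  · rw [CoxeterSystem.length_alternatingWord,
                      CoxeterSystem.length_alternatingWord]
                    omega
                · -- m < r < 2m : flip to the other alternating word
                  have hr2m : r ≤ K i i' * 2 := by omega
                  have hπ : cs.wordProd (CoxeterSystem.alternatingWord i' i (K i i' * 2 - r))
                      = cs.wordProd (CoxeterSystem.alternatingWord i i' r) :=
                    (cs.prod_alternatingWord_eq_prod_alternatingWord_sub i i' r hr2m).symm
                  apply DCON_transfer (ih _ _ ?_) ?_ hπ
                  · rw [CoxeterSystem.length_alternatingWord]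
                    omega
                  · intro j hj
                    exact (mem_aw i' i _ j hj).symm
                  · rw [CoxeterSystem.length_alternatingWord,
                      CoxeterSystem.length_alternatingWord]
                    omega
        · -- ω = aw i' i r
          obtain ⟨r, hrr⟩ : ∃ r, ω.length = r := ⟨_, rfl⟩
          rw [hrr] at hB hlen
          subst hB
          clear halpha hch hrr
          cases r with
          | zero => exact DCON_nil i i' _ rfl
          | succ r₀ =>
              have hsucc : CoxeterSystem.alternatingWord i' i (r₀ + 1)
                  = (CoxeterSystem.alternatingWord i i' r₀).concat i :=
                CoxeterSystem.alternatingWord_succ i' i r₀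
              have hπ : cs.wordProd (CoxeterSystem.alternatingWord i' i (r₀ + 1))
                  = cs.wordProd (CoxeterSystem.alternatingWord i i' r₀) * cs.simple i := by
                rw [hsucc, cs.wordProd_concat]
              have hD0 : DCON M K cs ρ i i' (CoxeterSystem.alternatingWord i i' r₀) := by
                apply ih
                · rw [CoxeterSystem.length_alternatingWord]
                  omega
                · exact mem_aw i i' _
              apply DCON_negate hMK hρ hD0 _ hπ
              rw [CoxeterSystem.length_alternatingWord]
              omega
      · -- ω has a duplicate pair
        have hπ : cs.wordProd (ω₁ ++ ω₂) = cs.wordProd (ω₁ ++ t :: t :: ω₂) :=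
          (wordProd_dup ω₁ ω₂ t).symm
        have hlen2 : (ω₁ ++ ω₂).length < (ω₁ ++ t :: t :: ω₂).length := by
          simp only [List.length_append, List.length_cons]
          omega
        apply DCON_transfer (ih _ _ ?_) hlen2 hπ
        · simp only [List.length_append, List.length_cons] at hlen ⊢
          omega
        · intro j hj
          apply halpha j
          rcases List.mem_append.mp hj with h | h
          · exact List.mem_append.mpr (Or.inl h)
          · exact List.mem_append.mpr (Or.inr (List.mem_cons_of_mem _ (List.mem_cons_of_mem _ h)))

end DihMain
section Positivity

open EGCMAux

variable {n : ℕ} {W : Type*} [Group W]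
  {M : Matrix (Fin n) (Fin n) ℝ} {K : CoxeterMatrix (Fin n)}
  {cs : CoxeterSystem K W}
  {ρ : W →* Module.End ℝ (Fin n → ℝ)}

local notation "sg" i => (Pi.single i 1 : Fin n → ℝ)

theorem length_mul_simple_of_descent {w : W} {q : Fin n} (h : cs.IsRightDescent w q) :
    cs.length (w * cs.simple q) + 1 = cs.length w := by
  rcases cs.length_mul_simple w q with h1 | h1
  · exfalso
    have := cs.length_mul_simple_ne w q
    unfold CoxeterSystem.IsRightDescent at h
    omega
  · exact h1

theorem length_mul_simple_of_not_descent {w : W} {q : Fin n} (h : ¬ cs.IsRightDescent w q) :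
    cs.length (w * cs.simple q) = cs.length w + 1 := by
  rcases cs.length_mul_simple w q with h1 | h1
  · exact h1
  · exfalso
    unfold CoxeterSystem.IsRightDescent at h
    omega

/-- Minimal coset decomposition relative to the two-letter alphabet `{p, q}`. -/
theorem min_decomp (w : W) (p q : Fin n) (hq : cs.IsRightDescent w q) :
    ∃ (v : W) (ω : List (Fin n)), (∀ j ∈ ω, j = p ∨ j = q) ∧ w = v * cs.wordProd ω ∧
      cs.length w = cs.length v + ω.length ∧ cs.length v < cs.length w ∧
      ¬ cs.IsRightDescent v p ∧ ¬ cs.IsRightDescent v q := by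
  classical
  set Pred : ℕ → Prop := fun r => ∃ (v : W) (ω : List (Fin n)),
    (∀ j ∈ ω, j = p ∨ j = q) ∧ w = v * cs.wordProd ω ∧
    cs.length w = cs.length v + ω.length ∧ cs.length v = r with hPred
  have h0 : Pred (cs.length (w * cs.simple q)) := by
    refine ⟨w * cs.simple q, [q], ?_, ?_, ?_, rfl⟩
    · intro j hj
      right
      simpa using hj
    · rw [cs.wordProd_singleton, mul_assoc, cs.simple_mul_simple_self, mul_one]
    · have := length_mul_simple_of_descent hq
      simp only [List.length_singleton]
      omega
  have hne : ∃ r, Pred r := ⟨_, h0⟩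
  obtain ⟨v, ω, halpha, hw, hsum, hmin⟩ := Nat.find_spec hne
  have hvlt : cs.length v < cs.length w := by
    have h1 : Nat.find hne ≤ cs.length (w * cs.simple q) := Nat.find_min' hne h0
    have h2 := length_mul_simple_of_descent hq
    omega
  have hnd : ∀ t : Fin n, (t = p ∨ t = q) → ¬ cs.IsRightDescent v t := by
    intro t ht hd
    have hvt : cs.length (v * cs.simple t) + 1 = cs.length v :=
      length_mul_simple_of_descent hd
    have hP : Pred (cs.length (v * cs.simple t)) := by
      refine ⟨v * cs.simple t, t :: ω, ?_, ?_, ?_, rfl⟩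
      · intro j hj
        rcases List.mem_cons.mp hj with rfl | hj
        · exact ht
        · exact halpha j hj
      · rw [cs.wordProd_cons, ← mul_assoc, cs.simple_mul_simple_cancel_right]
        exact hw
      · simp only [List.length_cons]
        omega
    have := Nat.find_min hne (show cs.length (v * cs.simple t) < Nat.find hne by omega) 
    exact this hP
  exact ⟨v, ω, halpha, hw, hsum, hvlt, hnd p (Or.inl rfl), hnd q (Or.inr rfl)⟩

/-- Theorem A: if `i` is not a right descent of `w`, then `w·α_i` is a nonnegative vector. -/
theorem posRoot (hMK : IsEGCM M K) (hρ : ∀ i, ρ (cs.simple i) = reflLin M i) :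
    ∀ (N : ℕ) (w : W) (i : Fin n), cs.length w ≤ N → ¬ cs.IsRightDescent w i →
      ∀ t, 0 ≤ ρ w (sg i) t := by
  intro N
  induction N with
  | zero =>
      intro w i hlen _ t
      have hw : w = 1 := cs.length_eq_zero_iff.mp (Nat.le_zero.mp hlen)
      rw [hw, map_one, Module.End.one_apply]
      rcases eq_or_ne t i with rfl | h
      · rw [Pi.single_eq_same]; norm_num
      · rw [Pi.single_eq_of_ne h]
  | succ N ih =>
      intro w i hlen hnd t
      by_cases hsmall : cs.length w ≤ N
      · exact ih w i hsmall hnd t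
      · have hw1 : w ≠ 1 := by
          intro h
          rw [h, cs.length_one] at hsmall
          omega
        obtain ⟨q, hq⟩ := cs.exists_rightDescent_of_ne_one hw1
        have hiq : i ≠ q := by
          intro h
          rw [h] at hnd
          exact hnd hq
        obtain ⟨v, ω, halpha, hw, hsum, hvlt, hvp, hvq⟩ := min_decomp w i q hq
        obtain ⟨x, y, heq, hcone, _, _⟩ :=
          dih hMK hρ i q hiq ω.length ω (le_refl _) halpha
        rcases hcone with ⟨hx, hy⟩ | ⟨_, ω', hα', hl', hp'⟩
        · rw [hw, rho_mul_apply, heq, map_add, map_smul, map_smul]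
          have h1 := ih v i (by omega) hvp t
          have h2 := ih v q (by omega) hvq t
          simp only [Pi.add_apply, Pi.smul_apply, smul_eq_mul]
          nlinarith
        · exfalso
          apply hnd
          unfold CoxeterSystem.IsRightDescent
          have hle : cs.length (w * cs.simple i) ≤ cs.length v + ω'.length := by
            calc cs.length (w * cs.simple i) = cs.length (v * cs.wordProd ω') := by
                  rw [hw, mul_assoc, ← hp']
            _ ≤ cs.length v + cs.length (cs.wordProd ω') := cs.length_mul_le _ _
            _ ≤ cs.length v + ω'.length := by
                  have := cs.length_wordProd_le ω'
                  omega
          omega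

theorem negRoot (hMK : IsEGCM M K) (hρ : ∀ i, ρ (cs.simple i) = reflLin M i)
    {w : W} {i : Fin n} (hd : cs.IsRightDescent w i) :
    ∀ t, ρ w (sg i) t ≤ 0 := by
  intro t
  have hw : w = (w * cs.simple i) * cs.simple i := by
    rw [mul_assoc, cs.simple_mul_simple_self, mul_one]
  have hvd : ¬ cs.IsRightDescent (w * cs.simple i) i := by
    unfold CoxeterSystem.IsRightDescent
    rw [mul_assoc, cs.simple_mul_simple_self, mul_one]
    have := length_mul_simple_of_descent hd
    omega
  have hpos := posRoot hMK hρ (cs.length (w * cs.simple i)) (w * cs.simple i) i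
    (le_refl _) hvd t
  have hneg : ρ w (sg i) = -(ρ (w * cs.simple i) (sg i)) := by
    conv_lhs => rw [hw]
    rw [rho_mul_apply, rho_simple_single hMK hρ, map_neg]
  rw [hneg]
  simp only [Pi.neg_apply]
  linarith

theorem root_sign_dichotomy (hMK : IsEGCM M K) (hρ : ∀ i, ρ (cs.simple i) = reflLin M i)
    (w : W) (i : Fin n) :
    (∀ t, 0 ≤ ρ w (sg i) t) ∨ (∀ t, ρ w (sg i) t ≤ 0) := by
  by_cases h : cs.IsRightDescent w i
  · exact Or.inr (negRoot hMK hρ h)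
  · exact Or.inl (posRoot hMK hρ (cs.length w) w i (le_refl _) h)

theorem Phi_sign_dichotomy (hMK : IsEGCM M K) (hρ : ∀ i, ρ (cs.simple i) = reflLin M i)
    {v : Fin n → ℝ} (hv : v ∈ Phi ρ) :
    (∀ t, 0 ≤ v t) ∨ (∀ t, v t ≤ 0) := by
  obtain ⟨w, j, rfl⟩ := hv
  exact root_sign_dichotomy hMK hρ w j

end Positivity
section Paths

variable {n : ℕ} {W : Type*} [Group W]
  {M : Matrix (Fin n) (Fin n) ℝ} {K : CoxeterMatrix (Fin n)}

/-- The last node of the path `j :: l` (a rewrite-friendly version of `getLast`). -/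
def lastOf {n : ℕ} (j : Fin n) : List (Fin n) → Fin n
  | [] => j
  | (k :: l) => lastOf k l

theorem lastOf_nil (j : Fin n) : lastOf j [] = j := rfl

theorem lastOf_cons (j k : Fin n) (l : List (Fin n)) : lastOf j (k :: l) = lastOf k l := rfl

theorem lastOf_eq_getLast : ∀ (l : List (Fin n)) (j : Fin n),
    lastOf j l = (j :: l).getLast (by simp) := by
  intro l
  induction l with
  | nil => intro j; rfl
  | cons k l ih =>
      intro j
      rw [lastOf_cons, ih k]
      simp

theorem lastOf_append : ∀ (l : List (Fin n)) (j : Fin n) (l' : List (Fin n)),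
    lastOf j (l ++ l') = lastOf (lastOf j l) l' := by
  intro l
  induction l with
  | nil => intro j l'; rfl
  | cons k l ih => intro j l'; rw [List.cons_append, lastOf_cons, lastOf_cons, ih]

theorem prodOA_nil (j : Fin n) : prodOA M K j [] = 1 := rfl

theorem prodOA_cons (j k : Fin n) (l : List (Fin n)) :
    prodOA M K j (k :: l) = Kcoef M K j k * prodOA M K k l := rfl

theorem OAStep_symm {i j : Fin n} (h : OAStep K i j) : OAStep K j i := by
  obtain ⟨hne, hodd⟩ := h
  exact ⟨hne.symm, by rwa [K.symmetric j i]⟩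

theorem OAStep_facts (hMK : IsEGCM M K) {i j : Fin n} (h : OAStep K i j) :
    3 ≤ K i j ∧ 0 < Real.cos (Real.pi / (K i j)) ∧ M i j < 0 ∧ M j i < 0 ∧
      M i j * M j i = 4 * Real.cos (Real.pi / (K i j)) ^ 2 := by
  obtain ⟨hne, hodd⟩ := h
  rcases hMK.2.2.2 i j hne with ⟨h0, _⟩ | ⟨h2, hab⟩
  · rw [h0] at hodd
    exact absurd hodd (by decide)
  · have h3 : 3 ≤ K i j := by
      rcases hodd with ⟨r, hr⟩
      omega
    have hcos : 0 < Real.cos (Real.pi / (K i j)) := EGCMAux.cos_theta_pos h3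
    have ha : M i j ≤ 0 := hMK.2.1 i j hne
    have hb : M j i ≤ 0 := hMK.2.1 j i hne.symm
    have hprod : 0 < M i j * M j i := by
      rw [hab]
      positivity
    have haneg : M i j < 0 := by
      rcases eq_or_lt_of_le ha with h | h
      · rw [h, zero_mul] at hprod
        exact absurd hprod (lt_irrefl 0)
      · exact h
    have hbneg : M j i < 0 := by
      rcases eq_or_lt_of_le hb with h | h
      · rw [h, mul_zero] at hprod
        exact absurd hprod (lt_irrefl 0)
      · exact h
    exact ⟨h3, hcos, haneg, hbneg, hab⟩

theorem Kcoef_pos (hMK : IsEGCM M K) {i j : Fin n} (h : OAStep K i j) :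
    0 < Kcoef M K i j := by
  obtain ⟨_, hcos, _, hbneg, _⟩ := OAStep_facts hMK h
  rw [Kcoef]
  apply div_pos (by linarith) (by linarith)

theorem Kcoef_mul (hMK : IsEGCM M K) {i j : Fin n} (h : OAStep K i j) :
    Kcoef M K i j * Kcoef M K j i = 1 := by
  obtain ⟨_, hcos, haneg, hbneg, hab⟩ := OAStep_facts hMK h
  have hsymm : K j i = K i j := K.symmetric j i
  rw [Kcoef, Kcoef, hsymm]
  rw [div_mul_div_comm, div_eq_one_iff_eq (by positivity)]
  ring_nf at hab ⊢
  linarith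

theorem prodOA_pos (hMK : IsEGCM M K) :
    ∀ (l : List (Fin n)) (j : Fin n), List.Chain (OAStep K) j l → 0 < prodOA M K j l := by
  intro l
  induction l with
  | nil => intro j _; rw [prodOA_nil]; norm_num
  | cons k l ih =>
      intro j hch
      rw [prodOA_cons]
      obtain ⟨hstep, hch⟩ := List.isChain_cons_cons.mp hch
      exact mul_pos (Kcoef_pos hMK hstep) (ih k hch)

theorem prodOA_append : ∀ (l : List (Fin n)) (j : Fin n) (l' : List (Fin n)),
    prodOA M K j (l ++ l') = prodOA M K j l * prodOA M K (lastOf j l) l' := by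
  intro l
  induction l with
  | nil => intro j l'; rw [List.nil_append, prodOA_nil, lastOf_nil, one_mul]
  | cons k l ih =>
      intro j l'
      rw [List.cons_append, prodOA_cons, prodOA_cons, ih, lastOf_cons, mul_assoc]

theorem chain_glue {R : Fin n → Fin n → Prop} :
    ∀ (l : List (Fin n)) (j x : Fin n) (r : List (Fin n)),
      List.Chain R j l → lastOf j l = x → List.Chain R x r →
      List.Chain R j (l ++ r) := by
  intro l
  induction l with
  | nil =>
      intro j x r _ hlast hchr
      rw [lastOf_nil] at hlast
      subst hlast
      simpa using hchr
  | cons k l ih =>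
      intro j x r hch hlast hchr
      obtain ⟨hstep, hch2⟩ := List.isChain_cons_cons.mp hch
      rw [lastOf_cons] at hlast
      exact List.Chain.cons hstep (ih k x r hch2 hlast hchr)

theorem chain_snoc {R : Fin n → Fin n → Prop} :
    ∀ (r : List (Fin n)) (x j : Fin n), List.Chain R x r →
      R (lastOf x r) j → List.Chain R x (r ++ [j]) := by
  intro r
  induction r with
  | nil =>
      intro x j _ hR
      exact List.Chain.cons (by rwa [lastOf_nil] at hR) List.Chain.nil
  | cons a r ih =>
      intro x j hch hR
      obtain ⟨hxa, hch⟩ := List.isChain_cons_cons.mp hch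
      exact List.Chain.cons hxa (ih a j hch (by rwa [lastOf_cons] at hR))

/-- Reversal of an OA-chain, with inverse product. -/
theorem chain_reverse (hMK : IsEGCM M K) :
    ∀ (l : List (Fin n)) (j x : Fin n) (r : List (Fin n)),
      List.Chain (OAStep K) j l → (j :: l).reverse = x :: r →
      List.Chain (OAStep K) x r ∧ prodOA M K j l * prodOA M K x r = 1 ∧
        lastOf x r = j := by
  intro l
  induction l with
  | nil =>
      intro j x r _ hrev
      simp only [List.reverse_singleton, List.cons.injEq] at hrev
      obtain ⟨rfl, rfl⟩ := hrev
      exact ⟨List.Chain.nil, by simp [prodOA_nil], rfl⟩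
  | cons k l ih =>
      intro j x r hch hrev
      obtain ⟨hstep, hch⟩ := List.isChain_cons_cons.mp hch
      have hrev2 : (j :: k :: l).reverse = (k :: l).reverse ++ [j] := by simp
      obtain ⟨x', r', hxr⟩ : ∃ x' r', (k :: l).reverse = x' :: r' :=
        List.exists_cons_of_ne_nil (by simp)
      obtain ⟨hch', hprod', hlast'⟩ := ih k x' r' hch hxr
      rw [hrev2, hxr] at hrev
      simp only [List.cons_append, List.cons.injEq] at hrev
      obtain ⟨rfl, rfl⟩ := hrev
      have hlaststep : OAStep K (lastOf x' r') j := by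
        rw [hlast']
        exact OAStep_symm hstep
      refine ⟨chain_snoc r' x' j hch' hlaststep, ?_, ?_⟩
      · rw [prodOA_cons, prodOA_append r' x' [j], hlast', prodOA_cons, prodOA_nil]
        have hKK := Kcoef_mul hMK hstep
        calc Kcoef M K j k * prodOA M K k l * (prodOA M K x' r' * (Kcoef M K k j * 1))
            = (Kcoef M K j k * Kcoef M K k j) * (prodOA M K k l * prodOA M K x' r') := by ring
        _ = 1 := by rw [hKK, hprod', one_mul]
      · rw [lastOf_append, lastOf_cons, lastOf_nil]

/-- Path independence of OA-products under unital OA-cyclicity. -/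
theorem path_indep (hMK : IsEGCM M K) (hU : UnitalOACyclic M K) {j x : Fin n}
    {l l' : List (Fin n)} (hch : List.Chain (OAStep K) j l) (hch' : List.Chain (OAStep K) j l')
    (hlast : lastOf j l = x) (hlast' : lastOf j l' = x) :
    prodOA M K j l = prodOA M K j l' := by
  obtain ⟨x', r, hxr⟩ : ∃ x' r, (j :: l').reverse = x' :: r :=
    List.exists_cons_of_ne_nil (by simp)
  obtain ⟨hchr, hprodr, hlastr⟩ := chain_reverse hMK l' j x' r hch' hxr
  have hx' : x' = x := by
    have h1 : j :: l' = r.reverse ++ [x'] := by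
      rw [← List.reverse_reverse (j :: l'), hxr]
      simp
    have h2 : lastOf j l' = x' := by
      have h3 : ∀ (L : List (Fin n)) (u : Fin n), u :: L = r.reverse ++ [x'] →
          lastOf u L = x' := by
        intro L u hL
        have : lastOf u L = (u :: L).getLast (by simp) := lastOf_eq_getLast L u
        rw [this]
        have h4 : (u :: L).getLast (by simp) = (r.reverse ++ [x']).getLast (by simp) := by
          congr 1
        rw [h4]
        simp
      exact h3 l' j h1
    rw [← h2, hlast']
  rw [hx'] at hchr hprodr hlastr
  have hchain2 : List.Chain (OAStep K) j (l ++ r) := chain_glue l j x r hch hlast hchr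
  have hlast2 : lastOf j (l ++ r) = j := by
    rw [lastOf_append, hlast, hlastr]
  have hcycle := hU j (l ++ r) hchain2 (by rw [← lastOf_eq_getLast]; exact hlast2)
  rw [prodOA_append l j r, hlast] at hcycle
  have hne : prodOA M K x r ≠ 0 := (prodOA_pos hMK r x hchr).ne'
  exact mul_right_cancel₀ hne (hcycle.trans hprodr.symm)

/-- The set of OA-path products into `x`. -/
def Fset (M : Matrix (Fin n) (Fin n) ℝ) (K : CoxeterMatrix (Fin n)) (x : Fin n) : Set ℝ :=
  {c | ∃ (j : Fin n) (l : List (Fin n)), List.Chain (OAStep K) j l ∧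
    lastOf j l = x ∧ prodOA M K j l = c}

theorem Fset_finite (hMK : IsEGCM M K) (hU : UnitalOACyclic M K) (x : Fin n) :
    (Fset M K x).Finite := by
  have hsub : Fset M K x ⊆ ⋃ j : Fin n, {c | ∃ l : List (Fin n),
      List.Chain (OAStep K) j l ∧ lastOf j l = x ∧ prodOA M K j l = c} := by
    rintro c ⟨j, l, h1, h2, h3⟩
    exact Set.mem_iUnion.mpr ⟨j, l, h1, h2, h3⟩
  apply Set.Finite.subset _ hsub
  apply Set.finite_iUnion
  intro j
  apply Set.Subsingleton.finite
  rintro c1 ⟨l1, hc1, hl1, hp1⟩ c2 ⟨l2, hc2, hl2, hp2⟩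
  rw [← hp1, ← hp2]
  exact path_indep hMK hU hc1 hc2 hl1 hl2

end Paths
section Multiples

variable {n : ℕ} {W : Type*} [Group W]
  {M : Matrix (Fin n) (Fin n) ℝ} {K : CoxeterMatrix (Fin n)}
  {cs : CoxeterSystem K W}
  {ρ : W →* Module.End ℝ (Fin n → ℝ)}

local notation "sg" i => (Pi.single i 1 : Fin n → ℝ)

theorem single_eq_smul_single {j x : Fin n} {c : ℝ}
    (h : (sg j) = c • (sg x)) : x = j ∧ c = 1 := by
  have hxj : x = j := by
    by_contra hne
    have h1 := congrFun h j
    simp only [Pi.single_eq_same, Pi.smul_apply, smul_eq_mul] at h1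
    rw [Pi.single_eq_of_ne (show j ≠ x from fun hh => hne hh.symm), mul_zero] at h1
    exact one_ne_zero h1
  subst hxj
  have h1 := congrFun h x
  rw [Pi.single_eq_same, Pi.smul_apply, Pi.single_eq_same, smul_eq_mul, mul_one] at h1
  exact ⟨rfl, h1.symm⟩

theorem collapse_contradiction (hMK : IsEGCM M K) {v : W} {j q x : Fin n} (hjq : j ≠ q)
    {X Y c : ℝ} (hX : 0 < X) (hY : 0 < Y)
    (hP : ∀ t, 0 ≤ ρ v (sg j) t) (hQ : ∀ t, 0 ≤ ρ v (sg q) t)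
    (hkey : c • (sg x) = X • (ρ v (sg j)) + Y • (ρ v (sg q))) : False := by
  have hPt : ∀ t, t ≠ x → ρ v (sg j) t = 0 ∧ ρ v (sg q) t = 0 := by
    intro t ht
    have h1 := congrFun hkey t
    simp only [Pi.smul_apply, Pi.add_apply, smul_eq_mul] at h1
    rw [Pi.single_eq_of_ne ht, mul_zero] at h1
    constructor <;> nlinarith [hP t, hQ t]
  have hPform : ρ v (sg j) = (ρ v (sg j) x) • (sg x) := by
    ext t
    rcases eq_or_ne t x with rfl | ht
    · rw [Pi.smul_apply, Pi.single_eq_same, smul_eq_mul, mul_one]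
    · rw [(hPt t ht).1, Pi.smul_apply, Pi.single_eq_of_ne ht, smul_eq_mul, mul_zero]
  have hQform : ρ v (sg q) = (ρ v (sg q) x) • (sg x) := by
    ext t
    rcases eq_or_ne t x with rfl | ht
    · rw [Pi.smul_apply, Pi.single_eq_same, smul_eq_mul, mul_one]
    · rw [(hPt t ht).2, Pi.smul_apply, Pi.single_eq_of_ne ht, smul_eq_mul, mul_zero]
  have hcomb : ρ v ((ρ v (sg q) x) • (sg j) - (ρ v (sg j) x) • (sg q)) = ρ v 0 := by
    rw [map_zero, map_sub, map_smul, map_smul, hPform, hQform]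
    ext t
    simp only [Pi.sub_apply, Pi.smul_apply, Pi.zero_apply, smul_eq_mul]
    ring
  have h0 := rho_inj v hcomb
  have hQx0 : ρ v (sg q) x = 0 := by
    have h1 := congrFun h0 j
    simp only [Pi.sub_apply, Pi.smul_apply, smul_eq_mul, Pi.zero_apply,
      Pi.single_eq_same, mul_one] at h1
    rw [Pi.single_eq_of_ne hjq, mul_zero, sub_zero] at h1
    exact h1
  apply rho_single_ne v q
  rw [hQform, hQx0, zero_smul]

/-- Every root that is a multiple of a simple root has its coefficient (in absolute value)
given by an OA-path product. -/
theorem claimP (hMK : IsEGCM M K) (hρ : ∀ i, ρ (cs.simple i) = reflLin M i) :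
    ∀ (N : ℕ) (w : W) (j x : Fin n) (c : ℝ), cs.length w ≤ N →
      ρ w (sg j) = c • (sg x) → c ≠ 0 →
      ∃ l : List (Fin n), List.Chain (OAStep K) j l ∧ lastOf j l = x ∧
        prodOA M K j l = |c| := by
  intro N
  induction N with
  | zero =>
      intro w j x c hlen heq hc
      have hw : w = 1 := cs.length_eq_zero_iff.mp (Nat.le_zero.mp hlen)
      rw [hw, map_one, Module.End.one_apply] at heq
      obtain ⟨rfl, rfl⟩ := single_eq_smul_single heq
      exact ⟨[], List.Chain.nil, rfl, by rw [prodOA_nil, abs_one]⟩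
  | succ N ih =>
      intro w j x c hlen heq hc
      by_cases hsmall : cs.length w ≤ N
      · exact ih w j x c hsmall heq hc
      · have hw1 : w ≠ 1 := by
          intro h
          rw [h, cs.length_one] at hsmall
          omega
        obtain ⟨q, hq⟩ := cs.exists_rightDescent_of_ne_one hw1
        by_cases hqj : j = q
        · -- strip the descent letter directly
          subst hqj
          have hlen2 : cs.length (w * cs.simple j) ≤ N := by
            have := length_mul_simple_of_descent hq
            omega
          have heq2 : ρ (w * cs.simple j) (sg j) = (-c) • (sg x) := by
            rw [rho_mul_apply, rho_simple_single hMK hρ, map_neg, heq]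
            ext t
            simp only [Pi.neg_apply, Pi.smul_apply, smul_eq_mul]
            ring
          obtain ⟨l, h1, h2, h3⟩ := ih (w * cs.simple j) j x (-c) hlen2 heq2 (neg_ne_zero.mpr hc)
          exact ⟨l, h1, h2, by rwa [abs_neg] at h3⟩
        · obtain ⟨v, ω, halpha, hwv, hsum, hvlt, hvj, hvq⟩ := min_decomp w j q hq
          obtain ⟨X, Y, heqd, hcone, hy0, hx0⟩ :=
            dih hMK hρ j q hqj ω.length ω (le_refl _) halpha
          have hkey : c • (sg x) = X • (ρ v (sg j)) + Y • (ρ v (sg q)) := by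
            rw [← heq, hwv, rho_mul_apply, heqd, map_add, map_smul, map_smul]
          have hvN : cs.length v ≤ N := by omega
          by_cases hY : Y = 0
          · have hX1 := hy0 hY
            rw [hY, zero_smul, add_zero] at hkey
            rcases hX1 with hX1 | hX1
            · rw [hX1, one_smul] at hkey
              exact ih v j x c hvN hkey.symm hc
            · have heq3 : ρ v (sg j) = (-c) • (sg x) := by
                rw [hX1] at hkey
                ext t
                have h1 := congrFun hkey t
                simp only [Pi.smul_apply, smul_eq_mul] at h1 ⊢
                linarith
              obtain ⟨l, h1, h2, h3⟩ := ih v j x (-c) hvN heq3 (neg_ne_zero.mpr hc)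
              exact ⟨l, h1, h2, by rwa [abs_neg] at h3⟩
          · by_cases hX : X = 0
            · obtain ⟨hOA, hKval⟩ := hx0 hX
              rw [hX, zero_smul, zero_add] at hkey
              have heq3 : ρ v (sg q) = (c / Y) • (sg x) := by
                ext t
                have h1 := congrFun hkey t
                simp only [Pi.smul_apply, smul_eq_mul] at h1 ⊢
                field_simp
                linarith
              obtain ⟨l, h1, h2, h3⟩ := ih v q x (c / Y) hvN heq3 (div_ne_zero hc hY)
              refine ⟨q :: l, List.Chain.cons hOA h1, by rwa [lastOf_cons], ?_⟩
              rw [prodOA_cons, h3, abs_div]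
              have hκ : 0 < Kcoef M K j q := Kcoef_pos hMK hOA
              have hYabs : |Y| = Kcoef M K j q := by
                rcases hKval with h | h
                · rw [h, abs_of_pos hκ]
                · rw [h, abs_neg, abs_of_pos hκ]
              rw [hYabs]
              field_simp
            · exfalso
              have hPv := posRoot hMK hρ (cs.length v) v j (le_refl _) hvj
              have hQv := posRoot hMK hρ (cs.length v) v q (le_refl _) hvq
              rcases hcone with ⟨hx1, hy1⟩ | ⟨⟨hx1, hy1⟩, _⟩
              · exact collapse_contradiction hMK hqj (lt_of_le_of_ne hx1 (Ne.symm hX))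
                  (lt_of_le_of_ne hy1 (Ne.symm hY)) hPv hQv hkey
              · refine collapse_contradiction hMK hqj
                  (show (0:ℝ) < -X by linarith [lt_of_le_of_ne hx1 hX])
                  (show (0:ℝ) < -Y by linarith [lt_of_le_of_ne hy1 hY]) hPv hQv (c := -c) (x := x) ?_
                ext t
                have h1 := congrFun hkey t
                simp only [Pi.smul_apply, Pi.add_apply, smul_eq_mul] at h1 ⊢
                linarith
              
theorem mult_finite (hMK : IsEGCM M K) (hρ : ∀ i, ρ (cs.simple i) = reflLin M i)
    (hU : UnitalOACyclic M K) (x : Fin n) :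
    (PhiPlus ρ ∩ multA x).Finite := by
  apply Set.Finite.subset ((Fset_finite hMK hU x).image (fun c => c • (sg x)))
  rintro v ⟨⟨hphi, hpos⟩, ⟨c, hcv⟩⟩
  obtain ⟨w, jj, hv⟩ := hphi
  have heq : ρ w (sg jj) = c • (sg x) := by rw [← hv, hcv]
  have hcne : c ≠ 0 := by
    intro h
    rw [h, zero_smul] at heq
    exact rho_single_ne w jj heq
  have hcpos : 0 < c := by
    have h1 := congrFun hcv x
    rw [Pi.smul_apply, Pi.single_eq_same, smul_eq_mul, mul_one] at h1
    have := hpos x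
    rw [h1] at this
    exact lt_of_le_of_ne this (Ne.symm hcne)
  obtain ⟨l, h1, h2, h3⟩ := claimP hMK hρ (cs.length w) w jj x c (le_refl _) heq hcne
  refine ⟨c, ⟨jj, l, h1, h2, ?_⟩, hcv.symm⟩
  rw [h3, abs_of_pos hcpos]

end Multiples
section Counting

variable {n : ℕ} {W : Type*} [Group W]
  {M : Matrix (Fin n) (Fin n) ℝ} {K : CoxeterMatrix (Fin n)}
  {cs : CoxeterSystem K W}
  {ρ : W →* Module.End ℝ (Fin n → ℝ)}

local notation "sg" i => (Pi.single i 1 : Fin n → ℝ)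

theorem NM_one : NM ρ (1 : W) = ∅ := by
  ext v
  simp only [NM, Set.mem_setOf_eq, Set.mem_empty_iff_false, iff_false, not_and]
  rintro ⟨hphi, hpos⟩ hneg
  obtain ⟨hphi2, hle⟩ : ρ (1:W) v ∈ Phi ρ ∧ ∀ t, ρ (1:W) v t ≤ 0 := hneg
  apply Phi_ne_zero hphi
  ext t
  have h1 := hle t
  rw [map_one, Module.End.one_apply] at h1
  have h2 := hpos t
  simp only [Pi.zero_apply]
  linarith

theorem rho_simple_invol (i : Fin n) (v : Fin n → ℝ) :
    ρ (cs.simple i) (ρ (cs.simple i) v) = v := by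
  rw [← rho_mul_apply, cs.simple_mul_simple_self, map_one, Module.End.one_apply]

theorem rho_simple_smul_single (hMK : IsEGCM M K) (hρ : ∀ i, ρ (cs.simple i) = reflLin M i)
    (i : Fin n) (c : ℝ) : ρ (cs.simple i) (c • (sg i)) = (-c) • (sg i) := by
  rw [map_smul, rho_simple_single hMK hρ]
  ext t
  simp only [Pi.smul_apply, Pi.neg_apply, smul_eq_mul]
  ring

theorem simple_perm (hMK : IsEGCM M K) (hρ : ∀ i, ρ (cs.simple i) = reflLin M i)
    {i : Fin n} {v : Fin n → ℝ} (hv : v ∈ PhiPlus ρ) (hnm : v ∉ multA i) :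
    ρ (cs.simple i) v ∈ PhiPlus ρ ∧ ρ (cs.simple i) v ∉ multA i := by
  obtain ⟨hphi, hpos⟩ := hv
  obtain ⟨t₀, ht₀i, ht₀⟩ : ∃ t₀, t₀ ≠ i ∧ 0 < v t₀ := by
    by_contra hcon
    push_neg at hcon
    apply hnm
    refine ⟨v i, ?_⟩
    ext t
    rcases eq_or_ne t i with rfl | ht
    · rw [Pi.smul_apply, Pi.single_eq_same, smul_eq_mul, mul_one]
    · have h1 := hcon t ht
      have h2 := hpos t
      rw [Pi.smul_apply, Pi.single_eq_of_ne ht, smul_eq_mul, mul_zero]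
      linarith
  have hcoords : ∀ t, t ≠ i → ρ (cs.simple i) v t = v t := by
    intro t ht
    rw [hρ i, reflLin_apply]
    simp only [Pi.sub_apply, Pi.smul_apply, smul_eq_mul]
    rw [Pi.single_eq_of_ne ht, mul_zero, sub_zero]
  have hmem : ρ (cs.simple i) v ∈ Phi ρ := Phi_smul_mem _ hphi
  have hsv : ∀ t, 0 ≤ ρ (cs.simple i) v t := by
    rcases Phi_sign_dichotomy hMK hρ hmem with h | h
    · exact h
    · exfalso
      have h1 := h t₀
      rw [hcoords t₀ ht₀i] at h1
      linarith
  refine ⟨⟨hmem, hsv⟩, ?_⟩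
  rintro ⟨c, hcv⟩
  have h1 := congrFun hcv t₀
  rw [hcoords t₀ ht₀i, Pi.smul_apply, Pi.single_eq_of_ne ht₀i, smul_eq_mul, mul_zero] at h1
  linarith

theorem NM_not_multA (hMK : IsEGCM M K) (hρ : ∀ i, ρ (cs.simple i) = reflLin M i)
    {u : W} {i : Fin n} (hnd : ¬ cs.IsRightDescent u i) {v₀ : Fin n → ℝ}
    (h : v₀ ∈ NM ρ u) : v₀ ∉ multA i := by
  obtain ⟨⟨hphi₀, hpos₀⟩, hneg₀⟩ := h
  rintro ⟨c, hcv⟩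
  have hc0 : 0 ≤ c := by
    have h1 := congrFun hcv i
    rw [Pi.smul_apply, Pi.single_eq_same, smul_eq_mul, mul_one] at h1
    rw [← h1]
    exact hpos₀ i
  have hposu := posRoot hMK hρ (cs.length u) u i (le_refl _) hnd
  have huv : ρ u v₀ = c • (ρ u (sg i)) := by rw [hcv, map_smul]
  have hzero : ρ u v₀ = ρ u 0 := by
    rw [map_zero]
    ext t
    have h1 : ρ u v₀ t ≤ 0 := hneg₀.2 t
    have h2 : 0 ≤ ρ u v₀ t := by
      rw [huv, Pi.smul_apply, smul_eq_mul]
      exact mul_nonneg hc0 (hposu t)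
    simp only [Pi.zero_apply]
    linarith
  exact Phi_ne_zero hphi₀ (rho_inj u hzero)

theorem NM_step (hMK : IsEGCM M K) (hρ : ∀ i, ρ (cs.simple i) = reflLin M i)
    (hU : UnitalOACyclic M K) {u : W} {i : Fin n} (hnd : ¬ cs.IsRightDescent u i)
    (hfin : (NM ρ u).Finite) :
    (NM ρ (u * cs.simple i)).Finite ∧
      (NM ρ (u * cs.simple i)).ncard = fnode ρ i + (NM ρ u).ncard := by
  have hset : NM ρ (u * cs.simple i) = (PhiPlus ρ ∩ multA i) ∪ (⇑(ρ (cs.simple i)) '' NM ρ u) := by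
    ext v
    constructor
    · rintro ⟨hvp, hneg⟩
      by_cases hm : v ∈ multA i
      · left
        exact ⟨hvp, hm⟩
      · right
        refine ⟨ρ (cs.simple i) v, ⟨(simple_perm hMK hρ hvp hm).1, ?_⟩, rho_simple_invol i v⟩
        rw [← rho_mul_apply]
        exact hneg
    · rintro (⟨hvp, c, hcv⟩ | ⟨v₀, hv₀, rfl⟩)
      · have hc0 : 0 ≤ c := by
          have h1 := congrFun hcv i
          rw [Pi.smul_apply, Pi.single_eq_same, smul_eq_mul, mul_one] at h1
          rw [← h1]
          exact hvp.2 i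
        refine ⟨hvp, ?_, ?_⟩
        · rw [rho_mul_apply]
          exact Phi_smul_mem _ (Phi_smul_mem _ hvp.1)
        · intro t
          rw [rho_mul_apply, hcv, rho_simple_smul_single hMK hρ, map_smul, Pi.smul_apply,
            smul_eq_mul]
          have := posRoot hMK hρ (cs.length u) u i (le_refl _) hnd t
          nlinarith
      · have hnm₀ := NM_not_multA hMK hρ hnd hv₀
        obtain ⟨⟨hphi₀, hpos₀⟩, hneg₀⟩ := hv₀
        refine ⟨(simple_perm hMK hρ ⟨hphi₀, hpos₀⟩ hnm₀).1, ?_, ?_⟩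
        · rw [rho_mul_apply, rho_simple_invol]
          exact hneg₀.1
        · intro t
          rw [rho_mul_apply, rho_simple_invol]
          exact hneg₀.2 t
  have hdisj : Disjoint (PhiPlus ρ ∩ multA i) (⇑(ρ (cs.simple i)) '' NM ρ u) := by
    rw [Set.disjoint_left]
    rintro v ⟨hvp, c, hcv⟩ ⟨v₀, hv₀, him⟩
    apply NM_not_multA hMK hρ hnd hv₀
    have hv₀v : v₀ = ρ (cs.simple i) v := by
      rw [← him, rho_simple_invol]
    rw [hv₀v, hcv, rho_simple_smul_single hMK hρ]
    exact ⟨-c, rfl⟩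
  have hfin1 : (PhiPlus ρ ∩ multA i).Finite := mult_finite hMK hρ hU i
  have hfin2 : (⇑(ρ (cs.simple i)) '' NM ρ u).Finite := hfin.image _
  have hfinU : (NM ρ (u * cs.simple i)).Finite := by
    rw [hset]
    exact hfin1.union hfin2
  refine ⟨hfinU, ?_⟩
  rw [hset, Set.ncard_union_eq hdisj hfin1 hfin2,
    Set.ncard_image_of_injective _ (rho_inj (cs.simple i))]
  rfl

theorem NM_word (hMK : IsEGCM M K) (hρ : ∀ i, ρ (cs.simple i) = reflLin M i)
    (hU : UnitalOACyclic M K) : ∀ ω : List (Fin n), cs.IsReduced ω →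
    (NM ρ (cs.wordProd ω)).Finite ∧
      (NM ρ (cs.wordProd ω)).ncard = (ω.map (fun i => fnode ρ i)).sum := by
  intro ω
  induction ω using List.reverseRecOn with
  | nil =>
      intro _
      rw [cs.wordProd_nil, NM_one]
      exact ⟨Set.finite_empty, by simp⟩
  | append_singleton ω₀ i ih =>
      intro hred
      have hred₀ : cs.IsReduced ω₀ := by
        have h1 := hred.take ω₀.length
        rwa [List.take_left] at h1
      have hπ : cs.wordProd (ω₀ ++ [i]) = cs.wordProd ω₀ * cs.simple i := by
        rw [cs.wordProd_append, cs.wordProd_singleton]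
      have hnd : ¬ cs.IsRightDescent (cs.wordProd ω₀) i := by
        unfold CoxeterSystem.IsRightDescent
        rw [← hπ]
        have h1 : cs.length (cs.wordProd (ω₀ ++ [i])) = ω₀.length + 1 := by
          have h2 : cs.IsReduced (ω₀ ++ [i]) := hred
          unfold CoxeterSystem.IsReduced at h2
          rw [h2]
          simp
        have h2 : cs.length (cs.wordProd ω₀) = ω₀.length := hred₀
        omega
      obtain ⟨hfin₀, hcard₀⟩ := ih hred₀
      obtain ⟨hfin, hcard⟩ := NM_step hMK hρ hU hnd hfin₀
      constructor
      · rw [hπ]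
        exact hfin
      · rw [hπ, hcard, hcard₀]
        simp only [List.map_append, List.sum_append, List.map_cons, List.map_nil,
          List.sum_cons, List.sum_nil]
        omega

theorem sum_bounds : ∀ (l : List ℕ) (lo hi : ℕ), (∀ a ∈ l, lo ≤ a ∧ a ≤ hi) →
    lo * l.length ≤ l.sum ∧ l.sum ≤ hi * l.length := by
  intro l
  induction l with
  | nil => intro lo hi _; simp
  | cons a l ih =>
      intro lo hi h
      obtain ⟨h1, h2⟩ := h a (List.mem_cons_self)
      obtain ⟨h3, h4⟩ := ih lo hi (fun b hb => h b (List.mem_cons_of_mem a hb))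
      simp only [List.length_cons, List.sum_cons]
      have e1 : lo * (l.length + 1) = lo * l.length + lo := by ring
      have e2 : hi * (l.length + 1) = hi * l.length + hi := by ring
      omega

end Counting

/-- If the E-GCM graph is unital OA-cyclic, then `f₁·ℓ(w) ≤ |N_M(w)| ≤ f₂·ℓ(w)`, where
`f₁` (resp. `f₂`) is the minimum (resp. maximum) of the numbers `f_{Γ',M'}` of positive-root
multiples of a simple root over OA-connected components (these numbers being constant on each
component); in particular `N_M(w)` is finite. -/
theorem NM_card_bounds {n : ℕ} {W : Type*} [Group W]
    (M : Matrix (Fin n) (Fin n) ℝ) (K : CoxeterMatrix (Fin n)) (hMK : IsEGCM M K)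
    (cs : CoxeterSystem K W)
    (ρ : W →* Module.End ℝ (Fin n → ℝ))
    (hρ : ∀ i, ρ (cs.simple i) = reflLin M i)
    (hU : UnitalOACyclic M K) (w : W) :
    (NM ρ w).Finite ∧
    sInf (Set.range (fnode ρ)) * cs.length w ≤ (NM ρ w).ncard ∧
    (NM ρ w).ncard ≤ sSup (Set.range (fnode ρ)) * cs.length w := by
  obtain ⟨ω, hred, hw⟩ := cs.exists_reduced_word' w
  obtain ⟨hfin, hcard⟩ := NM_word hMK hρ hU ω hred
  have hlenw : cs.length (cs.wordProd ω) = ω.length := hred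
  have hbounds := sum_bounds (ω.map (fun i => fnode ρ i)) (sInf (Set.range (fnode ρ)))
    (sSup (Set.range (fnode ρ))) (by
      intro a ha
      obtain ⟨i, _, rfl⟩ := List.mem_map.mp ha
      constructor
      · exact Nat.sInf_le ⟨i, rfl⟩
      · exact le_csSup (Set.Finite.bddAbove (Set.finite_range _)) ⟨i, rfl⟩)
  rw [List.length_map] at hbounds
  rw [hw]
  refine ⟨hfin, ?_, ?_⟩
  · rw [hcard, hlenw]
    exact hbounds.1
  · rw [hcard, hlenw]
    exact hbounds.2
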